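/- Let G be a treelike graph (every edge joining two distinct vertices is a bridge) with distinguished vertex v₁, and let D be a degree-0 divisor on G that is quasistable: for every nonempty proper subset Y ⊊ V, deg_Y(D) ≥ −κ_Y/2, with strict inequality when v₁ ∈ Y. Then D(v) = 0 for every vertex v. -/

import Mathlib

open Finset

/-- The number of non-loop edges between `Y` and its complement. -/
def edgeCut {V : Type*} [Fintype V] [DecidableEq V] (c : V → V → ℕ) (Y : Finset V) : ℕ :=
  ∑ v ∈ Y, ∑ w ∈ Yᶜ, c v w

/-- Connectedness of the multigraph with edge-multiplicity function `c`. -/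
def MultigraphConn {V : Type*} (c : V → V → ℕ) : Prop :=
  ∀ v w : V, Relation.ReflTransGen (fun a b => 0 < c a b) v w

/-- The multiplicity function obtained by deleting one copy of an edge between `v` and `w`. -/
def deleteEdge {V : Type*} [DecidableEq V] (c : V → V → ℕ) (v w : V) : V → V → ℕ :=
  fun a b => if (a = v ∧ b = w) ∨ (a = w ∧ b = v) then c a b - 1 else c a b

/-- `c` is treelike: every edge joining two distinct vertices is a bridge, i.e. deleting
one copy of it disconnects the graph. -/
def Treelike {V : Type*} [DecidableEq V] (c : V → V → ℕ) : Prop :=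
  ∀ v w : V, v ≠ w → 0 < c v w → ¬ MultigraphConn (deleteEdge c v w)

/-!
Fix a vertex `x`. Every connected component `K` of `G - x` is joined to `x` by exactly one
edge: by at least one since `G` is connected, and by at most one since after deleting one such
edge a second one would still join its endpoints through `K`, so the first was no bridge.
Hence `κ_K = κ_{Kᶜ} = 1`, and since degrees are integers, `deg ≥ -1/2` on both sides together
with `deg_K + deg_{Kᶜ} = 0` gives `deg_K = 0`. The components partition `V ∖ {x}`, so
`D x = deg_V = 0`.
-/

section

open Relation

variable {V : Type*}

section DeleteEdge

variable [DecidableEq V] {c : V → V → ℕ}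

theorem deleteEdge_comm (hsymm : ∀ v w, c v w = c w v) (v w a b : V) :
    deleteEdge c v w a b = deleteEdge c v w b a := by
  unfold deleteEdge
  rw [hsymm a b]
  congr 1
  exact propext (by tauto)

theorem deleteEdge_self (v w : V) : deleteEdge c v w v w = c v w - 1 := by
  simp [deleteEdge]

theorem deleteEdge_of_ne {v w a b : V} (ha : a ≠ w) (hb : b ≠ w) :
    deleteEdge c v w a b = c a b := by
  simp [deleteEdge, ha, hb]

theorem multigraphConn_deleteEdge_of_reflTransGen (hsymm : ∀ v w, c v w = c w v)
    (hconn : MultigraphConn c) {v w : V}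
    (hvw : ReflTransGen (fun a b => 0 < deleteEdge c v w a b) v w) :
    MultigraphConn (deleteEdge c v w) := by
  have hwv : ReflTransGen (fun a b => 0 < deleteEdge c v w a b) w v :=
    ReflTransGen.mono (fun a b h => by rwa [Function.swap, deleteEdge_comm hsymm] at h) _ _
      hvw.swap
  intro a b
  induction hconn a b with
  | refl => exact .refl
  | @tail p q _ hpq ih =>
    refine ih.trans ?_
    by_cases hd : 0 < deleteEdge c v w p q
    · exact .single hd
    · have hpq' : (p = v ∧ q = w) ∨ (p = w ∧ q = v) := by
        by_contra h
        simp only [deleteEdge, if_neg h] at hd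
        exact hd hpq
      rcases hpq' with ⟨rfl, rfl⟩ | ⟨rfl, rfl⟩
      exacts [hvw, hwv]

end DeleteEdge

section EdgeCut

variable [Fintype V] [DecidableEq V] {c : V → V → ℕ}

theorem edgeCut_compl (hsymm : ∀ v w, c v w = c w v) (Y : Finset V) :
    edgeCut c Yᶜ = edgeCut c Y := by
  rw [edgeCut, edgeCut, compl_compl, sum_comm]
  exact sum_congr rfl fun a _ => sum_congr rfl fun b _ => hsymm b a

theorem edgeCut_pos (hconn : MultigraphConn c) {Y : Finset V} {y z : V} (hy : y ∈ Y)
    (hz : z ∉ Y) : 0 < edgeCut c Y := by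
  by_contra! h
  have hclosed : ∀ a ∈ Y, ∀ b, 0 < c a b → b ∈ Y := by
    intro a ha b hab
    by_contra hb
    have := (sum_eq_zero_iff.1 (sum_eq_zero_iff.1 (Nat.le_zero.1 h) a ha)) b (mem_compl.2 hb)
    omega
  have hreach : ∀ b, ReflTransGen (fun a b => 0 < c a b) y b → b ∈ Y := fun b hb => by
    induction hb with
    | refl => exact hy
    | tail _ hpq ih => exact hclosed _ ih _ hpq
  exact hz (hreach z (hconn y z))

def Semistable (c : V → V → ℕ) (D : V → ℤ) : Prop :=
  ∀ Y : Finset V, Y.Nonempty → Y ≠ univ →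
    ((∑ v ∈ Y, D v : ℤ) : ℚ) ≥ -((edgeCut c Y : ℚ) / 2)

theorem Semistable.sum_eq_zero_of_edgeCut_eq_one {D : V → ℤ} (hD : Semistable c D)
    (hsymm : ∀ v w, c v w = c w v) (hdeg : ∑ v, D v = 0) {Y : Finset V} {y z : V}
    (hy : y ∈ Y) (hz : z ∉ Y) (hcut : edgeCut c Y = 1) : ∑ v ∈ Y, D v = 0 := by
  have hnonneg : ∀ Z : Finset V, Z.Nonempty → Z ≠ univ → edgeCut c Z = 1 →
      0 ≤ ∑ v ∈ Z, D v := by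
    intro Z hne hnu hZ
    have h := hD Z hne hnu
    rw [hZ] at h
    have : (-1 : ℚ) < ∑ v ∈ Z, D v := by push_cast at h ⊢; linarith
    exact_mod_cast this
  have hY := hnonneg Y ⟨y, hy⟩ (fun h => hz (h ▸ mem_univ z)) hcut
  have hYc := hnonneg Yᶜ ⟨z, mem_compl.2 hz⟩ (fun h => notMem_compl.2 hy (h ▸ mem_univ y))
    (by rw [edgeCut_compl hsymm, hcut])
  have := sum_add_sum_compl Y D
  omega

end EdgeCut

section Puncture

/-- The simple graph of `G - x`, keeping `x` as an isolated vertex. -/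
def puncture (c : V → V → ℕ) (x : V) : SimpleGraph V :=
  SimpleGraph.fromRel fun a b => a ≠ x ∧ b ≠ x ∧ 0 < c a b

variable {c : V → V → ℕ} {x y : V} {K : Finset V}

theorem puncture_adj (hsymm : ∀ v w, c v w = c w v) {a b : V} :
    (puncture c x).Adj a b ↔ a ≠ b ∧ a ≠ x ∧ b ≠ x ∧ 0 < c a b := by
  rw [puncture, SimpleGraph.fromRel_adj, hsymm b a]
  tauto

theorem puncture_reachable_self_iff {z : V} : (puncture c x).Reachable x z ↔ z = x := by
  refine ⟨fun h => ?_, fun h => h ▸ .rfl⟩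
  rw [SimpleGraph.reachable_iff_reflTransGen] at h
  rcases h.cases_head with rfl | ⟨b, hxb, -⟩
  · rfl
  · simp [puncture] at hxb

theorem reflTransGen_deleteEdge_of_puncture_reachable [DecidableEq V]
    (hsymm : ∀ v w, c v w = c w v) (v : V) {a b : V} (h : (puncture c x).Reachable a b) :
    ReflTransGen (fun p q => 0 < deleteEdge c v x p q) a b := by
  rw [SimpleGraph.reachable_iff_reflTransGen] at h
  refine ReflTransGen.mono (fun p q hpq => ?_) _ _ h
  obtain ⟨-, hp, hq, hpq⟩ := (puncture_adj hsymm).1 hpq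
  rwa [deleteEdge_of_ne hp hq]

theorem ne_of_mem_component (hyx : y ≠ x)
    (hK : ∀ z, z ∈ K ↔ (puncture c x).Reachable y z) {a : V} (ha : a ∈ K) : a ≠ x := by
  rintro rfl
  exact hyx (puncture_reachable_self_iff.1 ((hK a).1 ha).symm)

theorem edgeCut_component_eq_sum [Fintype V] [DecidableEq V] (hsymm : ∀ v w, c v w = c w v)
    (hyx : y ≠ x) (hK : ∀ z, z ∈ K ↔ (puncture c x).Reachable y z) :
    edgeCut c K = ∑ a ∈ K, c a x := by
  have hxK : x ∉ K := fun hx => ne_of_mem_component hyx hK hx rfl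
  refine sum_congr rfl fun a ha => sum_eq_single_of_mem x (mem_compl.2 hxK) fun b hb hbx => ?_
  by_contra hab
  have hadj : (puncture c x).Adj a b := (puncture_adj hsymm).2
    ⟨fun h => mem_compl.1 hb (h ▸ ha), ne_of_mem_component hyx hK ha, hbx,
      Nat.pos_of_ne_zero hab⟩
  exact mem_compl.1 hb ((hK b).2 (((hK a).1 ha).trans hadj.reachable))

theorem sum_component_le_one [DecidableEq V] (hsymm : ∀ v w, c v w = c w v)
    (hconn : MultigraphConn c) (htree : Treelike c) (hyx : y ≠ x)
    (hK : ∀ z, z ∈ K ↔ (puncture c x).Reachable y z) : ∑ a ∈ K, c a x ≤ 1 := by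
  by_contra! h
  obtain ⟨a, haK, hax⟩ := exists_ne_zero_of_sum_ne_zero (by omega : ∑ a ∈ K, c a x ≠ 0)
  have hb : ∑ b ∈ K, deleteEdge c a x b x ≠ 0 := by
    have hrest : ∀ b ∈ K.erase a, deleteEdge c a x b x = c b x := fun b hb => by
      simp [deleteEdge, ne_of_mem_erase hb, ne_of_mem_component hyx hK (mem_of_mem_erase hb)]
    rw [← add_sum_erase K _ haK, deleteEdge_self, sum_congr rfl hrest]
    have := add_sum_erase K (fun b => c b x) haK
    omega
  obtain ⟨b, hbK, hbx⟩ := exists_ne_zero_of_sum_ne_zero hb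
  have hab := reflTransGen_deleteEdge_of_puncture_reachable hsymm a
    (((hK a).1 haK).symm.trans ((hK b).1 hbK))
  exact htree a x (ne_of_mem_component hyx hK haK) (Nat.pos_of_ne_zero hax)
    (multigraphConn_deleteEdge_of_reflTransGen hsymm hconn (hab.tail (Nat.pos_of_ne_zero hbx)))

theorem edgeCut_component_eq_one [Fintype V] [DecidableEq V] (hsymm : ∀ v w, c v w = c w v)
    (hconn : MultigraphConn c) (htree : Treelike c) (hyx : y ≠ x)
    (hK : ∀ z, z ∈ K ↔ (puncture c x).Reachable y z) : edgeCut c K = 1 := by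
  have hpos := edgeCut_pos hconn ((hK y).2 .rfl) fun hx => ne_of_mem_component hyx hK hx rfl
  have hle := sum_component_le_one hsymm hconn htree hyx hK
  rw [edgeCut_component_eq_sum hsymm hyx hK] at hpos ⊢
  omega

end Puncture

end

/-- On a treelike connected multigraph with distinguished vertex `v₁`, a degree-0 quasistable
divisor (`deg_Y(D) ≥ -κ_Y/2` for all nonempty proper `Y`, strictly when `v₁ ∈ Y`) is
identically zero. -/
theorem quasistable_on_treelike_is_zero {V : Type*} [Fintype V] [DecidableEq V]
    (c : V → V → ℕ) (hsymm : ∀ v w, c v w = c w v) (hconn : MultigraphConn c)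
    (htree : Treelike c) (v₁ : V) (D : V → ℤ) (hdeg : ∑ v, D v = 0)
    (hq : ∀ Y : Finset V, Y.Nonempty → Y ≠ Finset.univ →
      ((∑ v ∈ Y, D v : ℤ) : ℚ) ≥ -((edgeCut c Y : ℚ) / 2) ∧
      (v₁ ∈ Y → ((∑ v ∈ Y, D v : ℤ) : ℚ) > -((edgeCut c Y : ℚ) / 2))) :
    ∀ v, D v = 0 := by
  classical
  intro x
  set G := puncture c x
  have hD : Semistable c D := fun Y hne hnu => (hq Y hne hnu).1
  have hcomp : ∀ C ≠ G.connectedComponentMk x,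
      ∑ z with G.connectedComponentMk z = C, D z = 0 := by
    refine SimpleGraph.ConnectedComponent.ind fun y hy => ?_
    have hyx : y ≠ x := fun h => hy (h ▸ rfl)
    have hK : ∀ z,
        z ∈ ({z | G.connectedComponentMk z = G.connectedComponentMk y} : Finset V) ↔
          G.Reachable y z := by
      simp [SimpleGraph.ConnectedComponent.eq, SimpleGraph.reachable_comm]
    exact hD.sum_eq_zero_of_edgeCut_eq_one hsymm hdeg ((hK y).2 .rfl)
      (fun hx => ne_of_mem_component hyx hK hx rfl)
      (edgeCut_component_eq_one hsymm hconn htree hyx hK)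
  have hx : ∑ z with G.connectedComponentMk z = G.connectedComponentMk x, D z = D x := by
    rw [← sum_singleton D x]
    congr 1
    ext z
    simp [SimpleGraph.ConnectedComponent.eq, SimpleGraph.reachable_comm (u := z),
      puncture_reachable_self_iff, G]
  calc D x = ∑ z with G.connectedComponentMk z = G.connectedComponentMk x, D z := hx.symm
    _ = ∑ C, ∑ z with G.connectedComponentMk z = C, D z :=
      (sum_eq_single _ (fun C _ => hcomp C) (by simp)).symm
    _ = ∑ z, D z := sum_fiberwise _ _ _
    _ = 0 := hdeg
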